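/- arXiv:1904.07000 — 3 statements merged into one kernel-verified Lean document; each statement's English description precedes it below -/
import Mathlib

section
/- For the 4-simplex Δ⁴ = 12345, every edge vector ψ_b (b an edge of Δ⁴) is a permitted coloring; that is, for every pair of edges b and jk of Δ⁴, the edge functional φ_{jk} vanishes on the edge vector ψ_b. -/
open Finset

/-- position (0-based) of vertex `v` in the increasing order of vertices of `t`. -/
def idx (t : Finset ℕ) (v : ℕ) : ℕ := (t.filter (· < v)).card

/-- coefficient rows of the constant edge functionals on a tetrahedron,
indexed by the (0-based) positions of the two vertices of the edge. -/
def phiRow : ℕ → ℕ → ℤ × ℤ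
  | 0, 1 => (0, 1)
  | 0, 2 => (1, -1)
  | 0, 3 => (-1, 0)
  | 1, 2 => (-1, 0)
  | 1, 3 => (1, 1)
  | 2, 3 => (0, -1)
  | _, _ => (0, 0)

/-- components of the constant edge vectors on a tetrahedron,
indexed by the (0-based) positions of the two vertices of the edge. -/
def psiRow : ℕ → ℕ → ℤ × ℤ
  | 0, 1 => (1, 0)
  | 0, 2 => (-1, 1)
  | 0, 3 => (0, -1)
  | 1, 2 => (0, -1)
  | 1, 3 => (1, 1)
  | 2, 3 => (-1, 0)
  | _, _ => (0, 0)

variable (F : Type) [Field F]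

/-- the `x`-component of the color of tetrahedron `t`, as a linear functional. -/
noncomputable def evalX (t : Finset ℕ) : (Finset ℕ → F × F) →ₗ[F] F :=
  (LinearMap.fst F F F).comp (LinearMap.proj (R := F) (φ := fun _ : Finset ℕ => F × F) t)

/-- the `y`-component of the color of tetrahedron `t`, as a linear functional. -/
noncomputable def evalY (t : Finset ℕ) : (Finset ℕ → F × F) →ₗ[F] F :=
  (LinearMap.snd F F F).comp (LinearMap.proj (R := F) (φ := fun _ : Finset ℕ => F × F) t)

/-- the edge functional `φ_{jk}` of the pentachoron `u`, as a linear functional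
on colorings (the tetrahedron opposite vertex `i` contributes with sign `(-1)^(i+1)`,
`i` counted 1-based, i.e. `(-1)^(idx u i)`). -/
noncomputable def phiLin (u : Finset ℕ) (j k : ℕ) : (Finset ℕ → F × F) →ₗ[F] F :=
  ∑ i ∈ u \ {j, k},
    ((-1 : F) ^ idx u i) •
      ((((phiRow (idx (u.erase i) j) (idx (u.erase i) k)).1 : F) • evalX F (u.erase i)) +
       (((phiRow (idx (u.erase i) j) (idx (u.erase i) k)).2 : F) • evalY F (u.erase i)))

/-- a coloring is permitted on the simplex with vertex set `S` if all edge functionals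
of all pentachora (5-element subsets) of `S` annihilate it. -/
def Permitted (S : Finset ℕ) (c : Finset ℕ → F × F) : Prop :=
  ∀ u ⊆ S, u.card = 5 → ∀ j ∈ u, ∀ k ∈ u, j < k → phiLin F u j k c = 0

/-- a coloring is permitted on a cluster `P` of pentachora if all edge functionals
of all pentachora of `P` annihilate it. -/
def PermittedOn (P : Finset (Finset ℕ)) (c : Finset ℕ → F × F) : Prop :=
  ∀ u ∈ P, ∀ j ∈ u, ∀ k ∈ u, j < k → phiLin F u j k c = 0

/-- the edge vector `ψ_{jk}` (for `j < k`). -/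
def psiVec (j k : ℕ) (t : Finset ℕ) : F × F :=
  if j ∈ t ∧ k ∈ t then
    (((psiRow (idx t j) (idx t k)).1 : F), ((psiRow (idx t j) (idx t k)).2 : F))
  else 0

open Classical in
/-- the edge vector `ψ_{jk}` with support cut down to the tetrahedra in `T`. -/
noncomputable def psiC (T : Set (Finset ℕ)) (j k : ℕ) (t : Finset ℕ) : F × F :=
  if t ∈ T then psiVec F j k t else 0

/-- the submodule of permitted colorings of the simplex with vertex set `S`. -/
noncomputable def PermittedSub (S : Finset ℕ) : Submodule F (Finset ℕ → F × F) :=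
  ⨅ (u : Finset ℕ) (_ : u ⊆ S ∧ u.card = 5) (p : ℕ × ℕ)
    (_ : p.1 ∈ u ∧ p.2 ∈ u ∧ p.1 < p.2), LinearMap.ker (phiLin F u p.1 p.2)

/-- the submodule of permitted colorings of a cluster `P` of pentachora. -/
noncomputable def PermittedSubOn (P : Finset (Finset ℕ)) : Submodule F (Finset ℕ → F × F) :=
  ⨅ (u : Finset ℕ) (_ : u ∈ P) (p : ℕ × ℕ)
    (_ : p.1 ∈ u ∧ p.2 ∈ u ∧ p.1 < p.2), LinearMap.ker (phiLin F u p.1 p.2)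

/-- colorings supported on the set `T` of tetrahedra. -/
noncomputable def Supported (T : Set (Finset ℕ)) : Submodule F (Finset ℕ → F × F) :=
  ⨅ (t : Finset ℕ) (_ : t ∉ T),
    LinearMap.ker (LinearMap.proj (R := F) (φ := fun _ : Finset ℕ => F × F) t)

/-- the increasing map identifying vertices `1, …` of `Δⁿ` with the vertices of the
face of `Δ^{n+1}` omitting vertex `k`. -/
def dmap (k i : ℕ) : ℕ := if i < k then i else i + 1

/-- restriction of a coloring of `Δ^{n+1}` onto its face omitting vertex `k`,
identified order-preservingly with `Δⁿ`. -/
def restr (k : ℕ) (c : Finset ℕ → F × F) : Finset ℕ → F × F :=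
  fun t => c (t.image (dmap k))

/-- the hexagon coboundary of an `n`-cochain (a function on colorings of `Δⁿ`). -/
noncomputable def hexδ (n : ℕ) (c : (Finset ℕ → F × F) → F) :
    (Finset ℕ → F × F) → F :=
  fun y => ∑ k ∈ Finset.Icc 1 (n + 2), (-1 : F) ^ (k + 1) * c (restr F k y)

/-- integer version of `psiVec`. -/
def psiVecZ (j k : ℕ) (t : Finset ℕ) : ℤ × ℤ :=
  if j ∈ t ∧ k ∈ t then psiRow (idx t j) (idx t k) else 0

lemma psiVec_fst (j k : ℕ) (t : Finset ℕ) :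
    (psiVec F j k t).1 = ((psiVecZ j k t).1 : F) := by
  unfold psiVec psiVecZ; split <;> simp

lemma psiVec_snd (j k : ℕ) (t : Finset ℕ) :
    (psiVec F j k t).2 = ((psiVecZ j k t).2 : F) := by
  unfold psiVec psiVecZ; split <;> simp

lemma phiLin_apply (u : Finset ℕ) (p q : ℕ) (c : Finset ℕ → F × F) :
    phiLin F u p q c = ∑ i ∈ u \ {p, q},
      ((-1 : F) ^ idx u i) *
        (((phiRow (idx (u.erase i) p) (idx (u.erase i) q)).1 : F) * (c (u.erase i)).1 +
         ((phiRow (idx (u.erase i) p) (idx (u.erase i) q)).2 : F) * (c (u.erase i)).2) := by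
  simp [phiLin, evalX, evalY, mul_add, smul_eq_mul, mul_assoc]

/-- the value of `φ_{pq}` on `ψ_{jk}`, computed over `ℤ`. -/
def valZ (p q j k : ℕ) : ℤ := ∑ i ∈ (Icc 1 5 : Finset ℕ) \ {p, q},
    ((-1 : ℤ) ^ idx (Icc 1 5) i) *
      ((phiRow (idx ((Icc 1 5).erase i) p) (idx ((Icc 1 5).erase i) q)).1 *
          (psiVecZ j k ((Icc 1 5).erase i)).1 +
       (phiRow (idx ((Icc 1 5).erase i) p) (idx ((Icc 1 5).erase i) q)).2 *
          (psiVecZ j k ((Icc 1 5).erase i)).2)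

lemma phiPsi_cast (p q j k : ℕ) :
    phiLin F (Icc 1 5) p q (psiVec F j k) = ((valZ p q j k : ℤ) : F) := by
  rw [phiLin_apply, valZ]
  push_cast [psiVec_fst, psiVec_snd]
  rfl

lemma valZ_eq_zero : ∀ j ∈ Icc 1 5, ∀ k ∈ Icc 1 5, ∀ p ∈ Icc 1 5, ∀ q ∈ Icc 1 5,
    valZ p q j k = 0 := by decide

/-- every edge vector `ψ_b` of `Δ⁴ = 12345` is a permitted coloring:
every edge functional `φ_{pq}` vanishes on `ψ_{jk}`. -/
theorem every_edge_vector_is_permitted :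
    ∀ j ∈ Icc 1 5, ∀ k ∈ Icc 1 5, j < k →
    ∀ p ∈ Icc 1 5, ∀ q ∈ Icc 1 5, p < q →
      phiLin F (Icc 1 5) p q (psiVec F j k) = 0 := by
  intro j hj k hk hjk p hp q hq hpq
  rw [phiPsi_cast, show valZ p q j k = 0 from
    valZ_eq_zero j hj k hk p hp q hq, Int.cast_zero]
end

section
/- The bilinear form c⁽³⁾(𝗑,𝗑′) = −x y′ − y x′ on pairs of colorings of the tetrahedron Δ³ = 1234 is a hexagon 3-cocycle: for every pair of permitted colorings (𝗑,𝗑′) of the 4-simplex Δ⁴ = 12345, one has Σ_{k=1}^{5} (−1)^{k+1} ( −x_{t_k} y′_{t_k} − y_{t_k} x′_{t_k} ) = 0, where t_k denotes the tetrahedron of Δ⁴ opposite vertex k. -/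
open Finset

variable (F : Type) [Field F]

lemma expand_12 (c : Finset ℕ → F × F) :
    phiLin F (Icc 1 5) 1 2 c = (1 : F) * (c ((Icc 1 5).erase 3)).2 + (-1 : F) * (c ((Icc 1 5).erase 4)).2 + (1 : F) * (c ((Icc 1 5).erase 5)).2 := by
  have hs : ((Icc 1 5 : Finset ℕ) \ {1, 2}) = {3, 4, 5} := by decide
  simp only [phiLin, LinearMap.sum_apply, hs]
  rw [Finset.sum_insert (by decide), Finset.sum_insert (by decide), Finset.sum_singleton]
  simp only [LinearMap.smul_apply, LinearMap.add_apply, evalX, evalY,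
    LinearMap.coe_comp, Function.comp_apply, LinearMap.proj_apply, LinearMap.fst_apply,
    LinearMap.snd_apply, smul_eq_mul,
    show idx (Icc 1 5) 3 = 2 from by decide,
    show idx (Icc 1 5) 4 = 3 from by decide,
    show idx (Icc 1 5) 5 = 4 from by decide,
    show idx ((Icc 1 5).erase 3) 1 = 0 from by decide,
    show idx ((Icc 1 5).erase 3) 2 = 1 from by decide,
    show idx ((Icc 1 5).erase 4) 1 = 0 from by decide,
    show idx ((Icc 1 5).erase 4) 2 = 1 from by decide,
    show idx ((Icc 1 5).erase 5) 1 = 0 from by decide,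
    show idx ((Icc 1 5).erase 5) 2 = 1 from by decide, phiRow]
  push_cast
  ring

lemma expand_13 (c : Finset ℕ → F × F) :
    phiLin F (Icc 1 5) 1 3 c = (-1 : F) * (c ((Icc 1 5).erase 2)).2 + (-1 : F) * (c ((Icc 1 5).erase 4)).1 + (1 : F) * (c ((Icc 1 5).erase 4)).2 + (1 : F) * (c ((Icc 1 5).erase 5)).1 + (-1 : F) * (c ((Icc 1 5).erase 5)).2 := by
  have hs : ((Icc 1 5 : Finset ℕ) \ {1, 3}) = {2, 4, 5} := by decide
  simp only [phiLin, LinearMap.sum_apply, hs]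
  rw [Finset.sum_insert (by decide), Finset.sum_insert (by decide), Finset.sum_singleton]
  simp only [LinearMap.smul_apply, LinearMap.add_apply, evalX, evalY,
    LinearMap.coe_comp, Function.comp_apply, LinearMap.proj_apply, LinearMap.fst_apply,
    LinearMap.snd_apply, smul_eq_mul,
    show idx (Icc 1 5) 2 = 1 from by decide,
    show idx (Icc 1 5) 4 = 3 from by decide,
    show idx (Icc 1 5) 5 = 4 from by decide,
    show idx ((Icc 1 5).erase 2) 1 = 0 from by decide,
    show idx ((Icc 1 5).erase 2) 3 = 1 from by decide,
    show idx ((Icc 1 5).erase 4) 1 = 0 from by decide,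
    show idx ((Icc 1 5).erase 4) 3 = 2 from by decide,
    show idx ((Icc 1 5).erase 5) 1 = 0 from by decide,
    show idx ((Icc 1 5).erase 5) 3 = 2 from by decide, phiRow]
  push_cast
  ring

lemma expand_14 (c : Finset ℕ → F × F) :
    phiLin F (Icc 1 5) 1 4 c = (-1 : F) * (c ((Icc 1 5).erase 2)).1 + (1 : F) * (c ((Icc 1 5).erase 2)).2 + (1 : F) * (c ((Icc 1 5).erase 3)).1 + (-1 : F) * (c ((Icc 1 5).erase 3)).2 + (-1 : F) * (c ((Icc 1 5).erase 5)).1 := by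
  have hs : ((Icc 1 5 : Finset ℕ) \ {1, 4}) = {2, 3, 5} := by decide
  simp only [phiLin, LinearMap.sum_apply, hs]
  rw [Finset.sum_insert (by decide), Finset.sum_insert (by decide), Finset.sum_singleton]
  simp only [LinearMap.smul_apply, LinearMap.add_apply, evalX, evalY,
    LinearMap.coe_comp, Function.comp_apply, LinearMap.proj_apply, LinearMap.fst_apply,
    LinearMap.snd_apply, smul_eq_mul,
    show idx (Icc 1 5) 2 = 1 from by decide,
    show idx (Icc 1 5) 3 = 2 from by decide,
    show idx (Icc 1 5) 5 = 4 from by decide,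
    show idx ((Icc 1 5).erase 2) 1 = 0 from by decide,
    show idx ((Icc 1 5).erase 2) 4 = 2 from by decide,
    show idx ((Icc 1 5).erase 3) 1 = 0 from by decide,
    show idx ((Icc 1 5).erase 3) 4 = 2 from by decide,
    show idx ((Icc 1 5).erase 5) 1 = 0 from by decide,
    show idx ((Icc 1 5).erase 5) 4 = 3 from by decide, phiRow]
  push_cast
  ring

lemma expand_23 (c : Finset ℕ → F × F) :
    phiLin F (Icc 1 5) 2 3 c = (1 : F) * (c ((Icc 1 5).erase 1)).2 + (1 : F) * (c ((Icc 1 5).erase 4)).1 + (-1 : F) * (c ((Icc 1 5).erase 5)).1 := by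
  have hs : ((Icc 1 5 : Finset ℕ) \ {2, 3}) = {1, 4, 5} := by decide
  simp only [phiLin, LinearMap.sum_apply, hs]
  rw [Finset.sum_insert (by decide), Finset.sum_insert (by decide), Finset.sum_singleton]
  simp only [LinearMap.smul_apply, LinearMap.add_apply, evalX, evalY,
    LinearMap.coe_comp, Function.comp_apply, LinearMap.proj_apply, LinearMap.fst_apply,
    LinearMap.snd_apply, smul_eq_mul,
    show idx (Icc 1 5) 1 = 0 from by decide,
    show idx (Icc 1 5) 4 = 3 from by decide,
    show idx (Icc 1 5) 5 = 4 from by decide,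
    show idx ((Icc 1 5).erase 1) 2 = 0 from by decide,
    show idx ((Icc 1 5).erase 1) 3 = 1 from by decide,
    show idx ((Icc 1 5).erase 4) 2 = 1 from by decide,
    show idx ((Icc 1 5).erase 4) 3 = 2 from by decide,
    show idx ((Icc 1 5).erase 5) 2 = 1 from by decide,
    show idx ((Icc 1 5).erase 5) 3 = 2 from by decide, phiRow]
  push_cast
  ring

lemma expand_24 (c : Finset ℕ → F × F) :
    phiLin F (Icc 1 5) 2 4 c = (1 : F) * (c ((Icc 1 5).erase 1)).1 + (-1 : F) * (c ((Icc 1 5).erase 1)).2 + (-1 : F) * (c ((Icc 1 5).erase 3)).1 + (1 : F) * (c ((Icc 1 5).erase 5)).1 + (1 : F) * (c ((Icc 1 5).erase 5)).2 := by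
  have hs : ((Icc 1 5 : Finset ℕ) \ {2, 4}) = {1, 3, 5} := by decide
  simp only [phiLin, LinearMap.sum_apply, hs]
  rw [Finset.sum_insert (by decide), Finset.sum_insert (by decide), Finset.sum_singleton]
  simp only [LinearMap.smul_apply, LinearMap.add_apply, evalX, evalY,
    LinearMap.coe_comp, Function.comp_apply, LinearMap.proj_apply, LinearMap.fst_apply,
    LinearMap.snd_apply, smul_eq_mul,
    show idx (Icc 1 5) 1 = 0 from by decide,
    show idx (Icc 1 5) 3 = 2 from by decide,
    show idx (Icc 1 5) 5 = 4 from by decide,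
    show idx ((Icc 1 5).erase 1) 2 = 0 from by decide,
    show idx ((Icc 1 5).erase 1) 4 = 2 from by decide,
    show idx ((Icc 1 5).erase 3) 2 = 1 from by decide,
    show idx ((Icc 1 5).erase 3) 4 = 2 from by decide,
    show idx ((Icc 1 5).erase 5) 2 = 1 from by decide,
    show idx ((Icc 1 5).erase 5) 4 = 3 from by decide, phiRow]
  push_cast
  ring

/-- the bilinear form `c⁽³⁾(𝗑,𝗑') = -x y' - y x'` is a hexagon 3-cocycle:
its alternating sum over the five tetrahedral faces `t_k = 12345 ∖ {k}` of `Δ⁴` vanishes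
on every pair of permitted colorings of `Δ⁴ = 12345`. -/
theorem bilinear_three_cocycle (c c' : Finset ℕ → F × F)
    (h : Permitted F (Icc 1 5) c) (h' : Permitted F (Icc 1 5) c') :
    ∑ k ∈ Icc 1 5, (-1 : F) ^ (k + 1) *
      (-(c ((Icc 1 5).erase k)).1 * (c' ((Icc 1 5).erase k)).2
        - (c ((Icc 1 5).erase k)).2 * (c' ((Icc 1 5).erase k)).1) = 0 := by
  
  have h12 := h (Icc 1 5) (Finset.Subset.refl _) (by decide) 1 (by decide) 2 (by decide) (by norm_num)
  have h'12 := h' (Icc 1 5) (Finset.Subset.refl _) (by decide) 1 (by decide) 2 (by decide) (by norm_num)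
  rw [expand_12] at h12 h'12
  have h13 := h (Icc 1 5) (Finset.Subset.refl _) (by decide) 1 (by decide) 3 (by decide) (by norm_num)
  have h'13 := h' (Icc 1 5) (Finset.Subset.refl _) (by decide) 1 (by decide) 3 (by decide) (by norm_num)
  rw [expand_13] at h13 h'13
  have h14 := h (Icc 1 5) (Finset.Subset.refl _) (by decide) 1 (by decide) 4 (by decide) (by norm_num)
  have h'14 := h' (Icc 1 5) (Finset.Subset.refl _) (by decide) 1 (by decide) 4 (by decide) (by norm_num)
  rw [expand_14] at h14 h'14
  have h23 := h (Icc 1 5) (Finset.Subset.refl _) (by decide) 2 (by decide) 3 (by decide) (by norm_num)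
  have h'23 := h' (Icc 1 5) (Finset.Subset.refl _) (by decide) 2 (by decide) 3 (by decide) (by norm_num)
  rw [expand_23] at h23 h'23
  have h24 := h (Icc 1 5) (Finset.Subset.refl _) (by decide) 2 (by decide) 4 (by decide) (by norm_num)
  have h'24 := h' (Icc 1 5) (Finset.Subset.refl _) (by decide) 2 (by decide) 4 (by decide) (by norm_num)
  rw [expand_24] at h24 h'24
  rw [show (Icc 1 5 : Finset ℕ) = {1,2,3,4,5} from by decide]
  rw [Finset.sum_insert (by decide), Finset.sum_insert (by decide), Finset.sum_insert (by decide),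
    Finset.sum_insert (by decide), Finset.sum_singleton]
  rw [show ({1,2,3,4,5} : Finset ℕ) = Icc 1 5 from by decide]
  linear_combination
    ((-1 : F) * (c' ((Icc 1 5).erase 3)).1 + (1 : F) * (c' ((Icc 1 5).erase 4)).1 + (-1 : F) * (c' ((Icc 1 5).erase 4)).2 + (-1 : F) * (c' ((Icc 1 5).erase 5)).1 + (1 : F) * (c' ((Icc 1 5).erase 5)).2) * h12 +
    ((-1 : F) * (c ((Icc 1 5).erase 2)).2 + (-1 : F) * (c ((Icc 1 5).erase 3)).1) * h'12 +
    ((-1 : F) * (c' ((Icc 1 5).erase 3)).1 + (2 : F) * (c' ((Icc 1 5).erase 4)).1 + (-1 : F) * (c' ((Icc 1 5).erase 4)).2 + (-1 : F) * (c' ((Icc 1 5).erase 5)).1 + (1 : F) * (c' ((Icc 1 5).erase 5)).2) * h13 +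
    ((-1 : F) * (c ((Icc 1 5).erase 2)).1 + (-1 : F) * (c ((Icc 1 5).erase 2)).2) * h'13 +
    ((1 : F) * (c' ((Icc 1 5).erase 4)).1 + (-1 : F) * (c' ((Icc 1 5).erase 4)).2 + (-1 : F) * (c' ((Icc 1 5).erase 5)).1 + (1 : F) * (c' ((Icc 1 5).erase 5)).2) * h14 +
    ((-1 : F) * (c ((Icc 1 5).erase 2)).2) * h'14 +
    ((-1 : F) * (c' ((Icc 1 5).erase 3)).1 + (2 : F) * (c' ((Icc 1 5).erase 4)).1 + (-1 : F) * (c' ((Icc 1 5).erase 5)).1 + (1 : F) * (c' ((Icc 1 5).erase 5)).2) * h23 +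
    ((-1 : F) * (c ((Icc 1 5).erase 1)).1 + (-1 : F) * (c ((Icc 1 5).erase 1)).2) * h'23 +
    ((1 : F) * (c' ((Icc 1 5).erase 4)).1 + (-1 : F) * (c' ((Icc 1 5).erase 5)).1) * h24 +
    ((-1 : F) * (c ((Icc 1 5).erase 1)).2) * h'24
end

section
/- Local coboundary extension lemma: let K be a finite simplicial complex, b an edge of K, and n ≥ 3. Let Δ be a simplicial n-cocycle on K that vanishes on every n-simplex not containing b. Define the (n−2)-cochain Ξ on the link lk(b,K) by Ξ(τ) = Δ(b⋆τ) for (n−2)-simplices τ of lk(b,K). Then (i) Ξ is an (n−2)-cocycle on lk(b,K); and (ii) if Ξ = δΞ̂ for some (n−3)-cochain Ξ̂ on lk(b,K), then Δ = δΔ̂, where Δ̂ is the (n−1)-cochain on K defined by Δ̂(b⋆τ′) = ±Ξ̂(τ′) (with the sign matching the position of the vertices of b in the ordered join) for (n−3)-simplices τ′ ⊂ lk(b,K), and Δ̂ = 0 on (n−1)-simplices not containing b. In particular, if H^{n−2}(lk(b,K), F) = 0 then every such locally supported cocycle Δ is a coboundary. -/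
open Finset

variable (F : Type) [Field F]

/-- the simplicial coboundary: `(δφ)(σ) = ∑_{v ∈ σ} (-1)^{idx σ v} φ(σ ∖ v)`
(facets ordered by the omitted vertex in increasing order). -/
noncomputable def scobound (φ : Finset ℕ → F) : Finset ℕ → F :=
  fun σ => ∑ v ∈ σ, (-1 : F) ^ idx σ v * φ (σ.erase v)

/-- the sign matching the positions of the vertices of the edge `b` in the ordered
join `b ⋆ τ`. -/
def epsB (b τ : Finset ℕ) : ℤ := (-1) ^ (∑ u ∈ τ, (b.filter (· < u)).card)

lemma idx_union_aux (b τ : Finset ℕ) (hd : Disjoint b τ) (v : ℕ) :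
    idx (b ∪ τ) v = (b.filter (· < v)).card + idx τ v := by
  unfold idx
  rw [Finset.filter_union,
    Finset.card_union_of_disjoint
      (Disjoint.mono (Finset.filter_subset _ _) (Finset.filter_subset _ _) hd)]

lemma epsB_erase_aux (b τ : Finset ℕ) (v : ℕ) (hv : v ∈ τ) :
    epsB b τ = (-1) ^ ((b.filter (· < v)).card) * epsB b (τ.erase v) := by
  unfold epsB
  rw [← Finset.add_sum_erase _ _ hv, pow_add]

lemma neg_one_sq_pow (m : ℕ) : ((-1 : F) ^ m) * ((-1 : F) ^ m) = 1 := by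
  rw [← pow_add, ← two_mul, pow_mul, neg_one_sq, one_pow]

lemma epsB_sq (b τ : Finset ℕ) : ((epsB b τ : ℤ) : F) * ((epsB b τ : ℤ) : F) = 1 := by
  unfold epsB
  push_cast
  exact neg_one_sq_pow F _

lemma term_sign (b τ : Finset ℕ) (hd : Disjoint b τ) (v : ℕ) (hv : v ∈ τ) :
    ((-1 : F) ^ (idx τ v)) * ((epsB b (τ.erase v) : ℤ) : F)
      = ((epsB b τ : ℤ) : F) * (-1 : F) ^ (idx (b ∪ τ) v) := by
  rw [idx_union_aux b τ hd v, epsB_erase_aux b τ v hv]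
  push_cast
  rw [pow_add]
  ring_nf
  rw [pow_mul', neg_one_sq, one_pow, mul_one]

lemma term_sign' (b τ : Finset ℕ) (hd : Disjoint b τ) (v : ℕ) (hv : v ∈ τ) :
    ((-1 : F) ^ (idx (b ∪ τ) v)) * ((epsB b (τ.erase v) : ℤ) : F)
      = ((epsB b τ : ℤ) : F) * (-1 : F) ^ (idx τ v) := by
  rw [idx_union_aux b τ hd v, epsB_erase_aux b τ v hv]
  push_cast
  rw [pow_add]
  ring

lemma union_erase_aux (b τ : Finset ℕ) (hd : Disjoint b τ) (v : ℕ) (hv : v ∈ τ) :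
    (b ∪ τ).erase v = b ∪ τ.erase v := by
  rw [Finset.erase_union_distrib,
    Finset.erase_eq_of_notMem (Finset.disjoint_right.mp hd hv)]

/-- local coboundary extension lemma. If `Δ` is a simplicial `n`-cocycle
on `K` vanishing on every `n`-simplex not containing the edge `b`, then
(i) `Ξ(τ) = ±Δ(b ⋆ τ)` is an `(n−2)`-cocycle on the link `lk(b,K)`;
(ii) if `Ξ = δΞ̂` on the link, then `Δ = δΔ̂` where `Δ̂(b ⋆ τ′) = ±Ξ̂(τ′)` and `Δ̂ = 0`
on `(n−1)`-simplices not containing `b`;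
(iii) in particular, if every `(n−2)`-cocycle on `lk(b,K)` is a coboundary
(`H^{n−2}(lk(b,K), F) = 0`), then `Δ` is a coboundary. -/
theorem local_coboundary_extension (K : Set (Finset ℕ))
    (hK : ∀ s ∈ K, ∀ s' ⊆ s, s' ∈ K)
    (b : Finset ℕ) (hb : b ∈ K) (hbcard : b.card = 2)
    (n : ℕ) (hn : 3 ≤ n) (Δ : Finset ℕ → F)
    (hcoc : ∀ σ ∈ K, σ.card = n + 2 → scobound F Δ σ = 0)
    (hsupp : ∀ σ ∈ K, σ.card = n + 1 → ¬ b ⊆ σ → Δ σ = 0) :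
    (∀ τ : Finset ℕ, Disjoint b τ → b ∪ τ ∈ K → τ.card = n →
        scobound F (fun τ' => (epsB b τ' : F) * Δ (b ∪ τ')) τ = 0)
    ∧ (∀ Ξh : Finset ℕ → F,
        (∀ τ : Finset ℕ, Disjoint b τ → b ∪ τ ∈ K → τ.card = n - 1 →
          (epsB b τ : F) * Δ (b ∪ τ) = scobound F Ξh τ) →
        ∀ σ ∈ K, σ.card = n + 1 →
          Δ σ = scobound F
            (fun σ' => if b ⊆ σ' then (epsB b (σ' \ b) : F) * Ξh (σ' \ b) else 0) σ)
    ∧ ((∀ Ξ₀ : Finset ℕ → F,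
          (∀ τ : Finset ℕ, Disjoint b τ → b ∪ τ ∈ K → τ.card = n →
            scobound F Ξ₀ τ = 0) →
          ∃ Ξh : Finset ℕ → F, ∀ τ : Finset ℕ, Disjoint b τ → b ∪ τ ∈ K →
            τ.card = n - 1 → Ξ₀ τ = scobound F Ξh τ) →
        ∃ D : Finset ℕ → F, ∀ σ ∈ K, σ.card = n + 1 → Δ σ = scobound F D σ) := by
  have part1 : ∀ τ : Finset ℕ, Disjoint b τ → b ∪ τ ∈ K → τ.card = n →
      scobound F (fun τ' => (epsB b τ' : F) * Δ (b ∪ τ')) τ = 0 := by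
    intro τ hd hKτ hcard
    have hcardU : (b ∪ τ).card = n + 2 := by
      rw [Finset.card_union_of_disjoint hd, hbcard, hcard]; ring
    have h0 := hcoc (b ∪ τ) hKτ hcardU
    unfold scobound at h0 ⊢
    rw [Finset.sum_union hd] at h0
    have hbterms : ∀ v ∈ b, (-1 : F) ^ (idx (b ∪ τ) v) * Δ ((b ∪ τ).erase v) = 0 := by
      intro v hv
      have hmem : (b ∪ τ).erase v ∈ K := hK _ hKτ _ (Finset.erase_subset _ _)
      have hcard' : ((b ∪ τ).erase v).card = n + 1 := by
        rw [Finset.card_erase_of_mem (Finset.mem_union_left _ hv), hcardU]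
        omega
      have hnsub : ¬ b ⊆ (b ∪ τ).erase v := fun h => Finset.notMem_erase v _ (h hv)
      rw [hsupp _ hmem hcard' hnsub, mul_zero]
    rw [Finset.sum_eq_zero hbterms, zero_add] at h0
    have hterm : ∀ v ∈ τ,
        (-1 : F) ^ (idx τ v) * ((epsB b (τ.erase v) : F) * Δ (b ∪ τ.erase v))
          = ((epsB b τ : F)) * ((-1 : F) ^ (idx (b ∪ τ) v) * Δ ((b ∪ τ).erase v)) := by
      intro v hv
      rw [union_erase_aux b τ hd v hv, ← mul_assoc, term_sign F b τ hd v hv, mul_assoc]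
    rw [Finset.sum_congr rfl hterm, ← Finset.mul_sum, h0, mul_zero]
  have part2 : ∀ Ξh : Finset ℕ → F,
      (∀ τ : Finset ℕ, Disjoint b τ → b ∪ τ ∈ K → τ.card = n - 1 →
        (epsB b τ : F) * Δ (b ∪ τ) = scobound F Ξh τ) →
      ∀ σ ∈ K, σ.card = n + 1 →
        Δ σ = scobound F
          (fun σ' => if b ⊆ σ' then (epsB b (σ' \ b) : F) * Ξh (σ' \ b) else 0) σ := by
    intro Ξh hΞ σ hσ hcard
    by_cases hbs : b ⊆ σ
    · set τ := σ \ b with hτ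
      have hd : Disjoint b τ := Finset.disjoint_sdiff
      have hσeq : b ∪ τ = σ := Finset.union_sdiff_of_subset hbs
      have hτcard : τ.card = n - 1 := by
        rw [hτ, Finset.card_sdiff_of_subset hbs, hcard, hbcard]
        omega
      have hΞ' := hΞ τ hd (hσeq ▸ hσ) hτcard
      rw [← hσeq]
      unfold scobound
      rw [Finset.sum_union hd]
      have hbterms : ∀ v ∈ b, (-1 : F) ^ (idx (b ∪ τ) v) *
          (if b ⊆ ((b ∪ τ).erase v) then
            (epsB b (((b ∪ τ).erase v) \ b) : F) * Ξh (((b ∪ τ).erase v) \ b) else 0) = 0 := by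
        intro v hv
        rw [if_neg (fun h => Finset.notMem_erase v _ (h hv)), mul_zero]
      rw [Finset.sum_eq_zero hbterms, zero_add]
      have hterm : ∀ v ∈ τ, (-1 : F) ^ (idx (b ∪ τ) v) *
          (if b ⊆ ((b ∪ τ).erase v) then
            (epsB b (((b ∪ τ).erase v) \ b) : F) * Ξh (((b ∪ τ).erase v) \ b) else 0)
          = ((epsB b τ : F)) * ((-1 : F) ^ (idx τ v) * Ξh (τ.erase v)) := by
        intro v hv
        rw [union_erase_aux b τ hd v hv,
          if_pos (Finset.subset_union_left),
          Finset.union_sdiff_cancel_left (hd.mono_right (Finset.erase_subset _ _)),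
          ← mul_assoc, term_sign' F b τ hd v hv, mul_assoc]
      rw [Finset.sum_congr rfl hterm, ← Finset.mul_sum]
      have : (∑ v ∈ τ, (-1 : F) ^ (idx τ v) * Ξh (τ.erase v)) = scobound F Ξh τ := rfl
      rw [this, ← hΞ', ← mul_assoc, epsB_sq, one_mul]
    · rw [hsupp σ hσ hcard hbs]
      symm
      unfold scobound
      apply Finset.sum_eq_zero
      intro v hv
      have hns : ¬ b ⊆ σ.erase v := fun h => hbs (h.trans (Finset.erase_subset _ _))
      simp only [if_neg hns, mul_zero]
  refine ⟨part1, part2, ?_⟩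
  intro H
  obtain ⟨Ξh, hΞh⟩ := H _ part1
  exact ⟨_, part2 Ξh hΞh⟩
end
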